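/- Let {η_t} be irreducible positive recurrent and reversible with respect to μ, with M = λμ finite. For disjoint A, B ⊆ E, define the probability ν_{AB}(η) = M(η)P_η[T_B⁺ < T_A⁺]/Cap(A,B) on A. Then for every μ-integrable g : E → ℝ, E_{ν_{AB}}[ ∫_0^{T_B} g(η_t) dt ] = ⟨g, f_{AB}⟩_μ / Cap(A,B), where f_{AB}(η) = P_η[T_A < T_B]. -/

import Mathlib

open MeasureTheory
open scoped ENNReal
open scoped Classical

/-- Hitting time (first `n ≥ 0` with `ω n ∈ A`) of a discrete-time path. -/
noncomputable def hitT {E : Type*} (A : Set E) (ω : ℕ → E) : ℕ∞ :=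
  ⨅ (n : ℕ) (_ : ω n ∈ A), (n : ℕ∞)

/-- Return time (first `n > 0` with `ω n ∈ A`) of a discrete-time path. -/
noncomputable def retT {E : Type*} (A : Set E) (ω : ℕ → E) : ℕ∞ :=
  ⨅ (n : ℕ) (_ : 0 < n ∧ ω n ∈ A), (n : ℕ∞)

/-!
Write `w(η) = M(η) P_η[T_B⁺ < T_A⁺]` on `A` (with `M = λμ`) and
`G(η, ζ) = ∑ₙ P_η[X_n = ζ, n < T_B]` for the Green function of the jump chain killed at `B`.
Splitting `{T_A < T_B}` according to the last visit to `A` before `T_B` (which exists because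
`B` is hit almost surely) and applying the Markov property at that time gives
`P_ζ[T_A < T_B] = ∑ₙ ∑_{η ∈ A} P_ζ[X_n = η, n < T_B] P_η[T_B⁺ < T_A⁺]`. Reversibility,
`M(η) P_η[X_n = ζ, n < T_B] = M(ζ) P_ζ[X_n = η, n < T_B]`, turns this into
`∑_η w(η) G(η, ζ) = M(ζ) P_ζ[T_A < T_B]`. Finally `E_η ∑_{n < T_B} h(X_n) = ∑_ζ h(ζ) G(η, ζ)`,
and with `h = g/λ` all sums converge absolutely because `g` is `μ`-integrable, so they may be
interchanged.
-/

section

variable {E : Type*}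

lemma enorm_toReal_le (a : ℝ≥0∞) : ‖a.toReal‖ₑ ≤ a :=
  (Real.enorm_of_nonneg ENNReal.toReal_nonneg).trans_le ENNReal.ofReal_toReal_le

lemma ofReal_mul_ofReal_div_symm {R : E → E → ℝ} {lam μ : E → ℝ} (hlampos : ∀ η, 0 < lam η)
    (hμ : ∀ η, 0 ≤ μ η) (hrev : ∀ η ξ, μ η * R η ξ = μ ξ * R ξ η) (η ξ : E) :
    ENNReal.ofReal (lam η * μ η) * ENNReal.ofReal (R η ξ / lam η) =
      ENNReal.ofReal (lam ξ * μ ξ) * ENNReal.ofReal (R ξ η / lam ξ) := by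
  have hcancel (a b : E) : lam a * μ a * (R a b / lam a) = μ a * R a b := by
    field_simp [(hlampos a).ne']
  rw [← ENNReal.ofReal_mul (mul_nonneg (hlampos η).le (hμ η)),
    ← ENNReal.ofReal_mul (mul_nonneg (hlampos ξ).le (hμ ξ)), hcancel, hcancel, hrev]

lemma tsum_enorm_div_mul_ne_top {lam μ g : E → ℝ} {f : E → ℝ≥0∞} (hlampos : ∀ η, 0 < lam η)
    (hgint : Summable fun ζ => μ ζ * |g ζ|) (hf : ∀ ζ, f ζ ≤ 1) :
    ∑' ζ, ‖g ζ / lam ζ‖ₑ * (ENNReal.ofReal (lam ζ * μ ζ) * f ζ) ≠ ⊤ := by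
  refine ne_top_of_le_ne_top hgint.tsum_ofReal_ne_top (ENNReal.tsum_le_tsum fun ζ => ?_)
  calc ‖g ζ / lam ζ‖ₑ * (ENNReal.ofReal (lam ζ * μ ζ) * f ζ)
      ≤ ‖g ζ / lam ζ‖ₑ * (ENNReal.ofReal (lam ζ * μ ζ) * 1) := by gcongr; exact hf ζ
    _ = ENNReal.ofReal (μ ζ * |g ζ|) := by
      rw [mul_one, Real.enorm_eq_ofReal_abs, ← ENNReal.ofReal_mul (abs_nonneg _), abs_div,
        abs_of_pos (hlampos ζ)]
      congr 1
      field_simp [(hlampos ζ).ne']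

lemma natCast_lt_iInf_iff {Q : ℕ → Prop} {n : ℕ} :
    (n : ℕ∞) < ⨅ (m : ℕ) (_ : Q m), (m : ℕ∞) ↔ ∀ m ≤ n, ¬ Q m := by
  rw [← ENat.add_one_le_iff (ENat.natCast_ne_top n), le_iInf₂_iff]
  refine forall_congr' fun m => ⟨fun h hmn hQ => ?_, fun h hQ => ?_⟩
  · have := h hQ
    norm_cast at this
    omega
  · have : n < m := by by_contra hc; exact h (by omega) hQ
    exact_mod_cast this

lemma iInf_le_natCast_iff {Q : ℕ → Prop} {n : ℕ} :
    ⨅ (m : ℕ) (_ : Q m), (m : ℕ∞) ≤ n ↔ ∃ m ≤ n, Q m := by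
  simpa using natCast_lt_iInf_iff.not

lemma hitT_lt_hitT_iff {A B : Set E} {ω : ℕ → E} :
    hitT A ω < hitT B ω ↔ ∃ n, ω n ∈ A ∧ ∀ m ≤ n, ω m ∉ B := by
  constructor
  · intro h
    obtain ⟨k, hk⟩ := ENat.ne_top_iff_exists.mp h.ne_top
    obtain ⟨n, hnk, hnA⟩ := iInf_le_natCast_iff.mp hk.ge
    exact ⟨n, hnA, fun m hm => natCast_lt_iInf_iff.mp (hk ▸ h) m (hm.trans hnk)⟩
  · rintro ⟨n, hA, hB⟩
    exact (iInf₂_le n hA).trans_lt (natCast_lt_iInf_iff.mpr hB)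

def pathShift (n : ℕ) (ω : ℕ → E) : ℕ → E := fun k => ω (k + n)

def killedAt (B : Set E) (n : ℕ) (ζ : E) : Set (ℕ → E) :=
  {ω | ω n = ζ ∧ ∀ m ≤ n, ω m ∉ B}

lemma killedAt_zero (B : Set E) (ζ : E) :
    killedAt B 0 ζ = {ω | ω 0 = ζ ∧ ζ ∉ B} := by
  ext ω
  simp only [killedAt, Set.mem_ofPred_eq, Nat.le_zero, forall_eq]
  exact ⟨fun ⟨h0, hB⟩ => ⟨h0, h0 ▸ hB⟩, fun ⟨h0, hB⟩ => ⟨h0, h0 ▸ hB⟩⟩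

lemma killedAt_succ (B : Set E) (n : ℕ) (ζ : E) :
    killedAt B (n + 1) ζ = {ω | ω 0 ∉ B} ∩ pathShift 1 ⁻¹' killedAt B n ζ := by
  ext ω
  simp only [killedAt, pathShift, Set.mem_inter_iff, Set.mem_preimage, Set.mem_ofPred_eq]
  constructor
  · exact fun ⟨hζ, hB⟩ => ⟨hB 0 (by omega), hζ, fun m hm => hB (m + 1) (by omega)⟩
  · rintro ⟨h0, hζ, hB⟩
    refine ⟨hζ, fun m hm => ?_⟩
    cases m with
    | zero => exact h0
    | succ m => exact hB m (by omega)

def lastExitAt (A B : Set E) (n : ℕ) : Set (ℕ → E) :=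
  {ω | ω n ∈ A ∧ (∀ m ≤ n, ω m ∉ B) ∧ retT B (pathShift n ω) < retT A (pathShift n ω)}

lemma lastExitAt_eq_biUnion (A B : Set E) (n : ℕ) :
    lastExitAt A B n =
      ⋃ η ∈ A, killedAt B n η ∩ pathShift n ⁻¹' {ω | retT B ω < retT A ω} := by
  ext ω
  simp only [lastExitAt, killedAt, Set.mem_iUnion, Set.mem_inter_iff, Set.mem_preimage,
    Set.mem_ofPred_eq, exists_prop]
  exact ⟨fun ⟨hA, hB, hr⟩ => ⟨ω n, hA, ⟨rfl, hB⟩, hr⟩,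
    fun ⟨_, hA, ⟨h, hB⟩, hr⟩ => ⟨h ▸ hA, hB, hr⟩⟩

lemma pairwise_disjoint_lastExitAt (A B : Set E) :
    Pairwise (Function.onFun Disjoint (lastExitAt A B)) := by
  have key : ∀ n n', n < n' → ∀ ω, ω ∈ lastExitAt A B n → ω ∉ lastExitAt A B n' := by
    rintro n n' hlt ω ⟨-, -, hr⟩ ⟨hA', hB', -⟩
    have hretA : retT A (pathShift n ω) ≤ (n' - n : ℕ) :=
      iInf₂_le (n' - n) ⟨by omega, by simpa [pathShift, Nat.sub_add_cancel hlt.le] using hA'⟩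
    obtain ⟨m, hm, -, hmB⟩ := iInf_le_natCast_iff.mp (hr.trans_le hretA).le
    exact hB' (m + n) (by omega) hmB
  refine fun n n' hne => Set.disjoint_left.mpr fun ω h h' => ?_
  rcases Nat.lt_or_gt_of_ne hne with hlt | hlt
  · exact key n n' hlt ω h h'
  · exact key n' n hlt ω h' h

lemma exists_lastExitAt_iff {A B : Set E} (hAB : Disjoint A B) {ω : ℕ → E}
    (hω : ∃ k, ω k ∈ B) : (∃ n, ω ∈ lastExitAt A B n) ↔ hitT A ω < hitT B ω := by
  refine ⟨fun ⟨n, hA, hB, _⟩ => hitT_lt_hitT_iff.mpr ⟨n, hA, hB⟩, fun h => ?_⟩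
  obtain ⟨n₀, hn₀A, hn₀B⟩ := hitT_lt_hitT_iff.mp h
  set k := Nat.find hω
  have hkB : ω k ∈ B := Nat.find_spec hω
  have hn₀k : n₀ < k := lt_of_not_ge fun hle => hn₀B k hle hkB
  set n := Nat.findGreatest (fun m => ω m ∈ A) k
  have hnA : ω n ∈ A := Nat.findGreatest_spec (P := fun m => ω m ∈ A) hn₀k.le hn₀A
  have hnk : n < k :=
    (Nat.findGreatest_le k).lt_of_ne fun he => hAB.ne_of_mem hnA hkB (congrArg ω he)
  refine ⟨n, hnA, fun m hm => Nat.find_min hω (by omega), ?_⟩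
  calc retT B (pathShift n ω) ≤ (k - n : ℕ) :=
        iInf₂_le (k - n) ⟨by omega, by simpa [pathShift, Nat.sub_add_cancel hnk.le] using hkB⟩
    _ < retT A (pathShift n ω) := natCast_lt_iInf_iff.mpr fun m hm ⟨_, hmA⟩ =>
        Nat.findGreatest_is_greatest (show n < m + n by omega) (by omega) hmA

noncomputable def sumBeforeHit (B : Set E) (h : E → ℝ) (ω : ℕ → E) : ℝ :=
  ∑' n : ℕ, if (n : ℕ∞) < hitT B ω then h (ω n) else 0

lemma sumBeforeHit_eq_tsum_indicator (B : Set E) (h : E → ℝ) (ω : ℕ → E) :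
    sumBeforeHit B h ω = ∑' q : ℕ × E, (killedAt B q.1 q.2).indicator (fun _ => h q.2) ω := by
  have hinj : Function.Injective fun n => (n, ω n) := fun n n' hn => congrArg Prod.fst hn
  rw [← hinj.tsum_eq]
  · refine tsum_congr fun n => ?_
    simp only [Set.indicator, killedAt, Set.mem_ofPred_eq, true_and, hitT, natCast_lt_iInf_iff]
  · rintro ⟨n, ζ⟩ hq
    exact ⟨n, Prod.ext rfl (Set.mem_of_indicator_ne_zero hq).1⟩

instance ENat.borelSpace : BorelSpace ℕ∞ :=
  ⟨borel_eq_top_of_countable.symm⟩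

lemma measurable_iInf_natCast {Ω : Type*} [MeasurableSpace Ω] {Q : ℕ → Ω → Prop}
    (hQ : ∀ m, MeasurableSet {ω | Q m ω}) :
    Measurable fun ω => ⨅ (m : ℕ) (_ : Q m ω), (m : ℕ∞) := by
  simp only [iInf_eq_if]
  exact Measurable.iInf fun m => Measurable.ite (hQ m) measurable_const measurable_const

variable [MeasurableSpace E]

lemma measurable_retT {A : Set E} (hA : MeasurableSet A) : Measurable (retT A) :=
  measurable_iInf_natCast fun m => (MeasurableSet.const (0 < m)).inter (measurable_pi_apply m hA)

lemma measurable_pathShift (n : ℕ) : Measurable (pathShift (E := E) n) :=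
  measurable_pi_lambda _ fun k => measurable_pi_apply (k + n)

lemma measurableSet_apply_eq [MeasurableSingletonClass E] (n : ℕ) (ξ : E) :
    MeasurableSet {ω : ℕ → E | ω n = ξ} :=
  (measurableSet_singleton ξ).preimage (measurable_pi_apply n)

lemma measurableSet_forall_le_notMem {B : Set E} (hB : MeasurableSet B) (n : ℕ) :
    MeasurableSet {ω : ℕ → E | ∀ m ≤ n, ω m ∉ B} := by
  simp only [Set.ofPred_forall]
  exact .iInter fun m => .iInter fun _ => hB.compl.preimage (measurable_pi_apply m)

lemma measurableSet_killedAt [MeasurableSingletonClass E] {B : Set E} (hB : MeasurableSet B)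
    (n : ℕ) (ζ : E) : MeasurableSet (killedAt B n ζ) :=
  (measurableSet_apply_eq n ζ).inter (measurableSet_forall_le_notMem hB n)

lemma measurableSet_lastExitAt {A B : Set E} (hA : MeasurableSet A) (hB : MeasurableSet B)
    (n : ℕ) : MeasurableSet (lastExitAt A B n) :=
  (hA.preimage (measurable_pi_apply n)).inter ((measurableSet_forall_le_notMem hB n).inter
    (measurable_pathShift n (measurableSet_lt (measurable_retT hB) (measurable_retT hA))))

lemma measure_hitT_lt_hitT {A B : Set E} (hA : MeasurableSet A) (hB : MeasurableSet B)
    (hAB : Disjoint A B) {ν : Measure (ℕ → E)} (hrec : ∀ᵐ ω ∂ν, ∃ k, ω k ∈ B) :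
    ν {ω | hitT A ω < hitT B ω} = ∑' n, ν (lastExitAt A B n) := by
  rw [← measure_iUnion (pairwise_disjoint_lastExitAt A B) (measurableSet_lastExitAt hA hB)]
  refine measure_congr (hrec.mono fun ω hω => ?_)
  exact propext ((exists_lastExitAt_iff hAB hω).symm.trans Set.mem_iUnion.symm)

lemma integral_sumBeforeHit [MeasurableSingletonClass E] [Countable E] (ν : Measure (ℕ → E))
    (B : Set E) (h : E → ℝ) (hfin : ∑' q : ℕ × E, ‖h q.2‖ₑ * ν (killedAt B q.1 q.2) ≠ ⊤) :
    ∫ ω, sumBeforeHit B h ω ∂ν = ∑' q : ℕ × E, h q.2 * ν.real (killedAt B q.1 q.2) := by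
  have hmeas : ∀ q : ℕ × E, MeasurableSet (killedAt B q.1 q.2) :=
    fun q => measurableSet_killedAt B.to_countable.measurableSet _ _
  simp_rw [sumBeforeHit_eq_tsum_indicator]
  rw [integral_tsum (fun q => aestronglyMeasurable_const.indicator (hmeas q))]
  · simp_rw [integral_indicator_const _ (hmeas _), smul_eq_mul, mul_comm]
  · simpa [enorm_indicator_eq_indicator_enorm, lintegral_indicator_const (hmeas _), mul_comm]
      using hfin

lemma toReal_mul_integral_sumBeforeHit [MeasurableSingletonClass E] [Countable E]
    (ν : Measure (ℕ → E)) (B : Set E) (h : E → ℝ) {a : ℝ≥0∞}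
    (hfin : a * ∑' q : ℕ × E, ‖h q.2‖ₑ * ν (killedAt B q.1 q.2) ≠ ⊤) :
    a.toReal * ∫ ω, sumBeforeHit B h ω ∂ν =
      ∑' q : ℕ × E, a.toReal * (h q.2 * ν.real (killedAt B q.1 q.2)) := by
  by_cases ha : a.toReal = 0
  · simp [ha]
  rw [integral_sumBeforeHit ν B h fun htop => hfin ?_, tsum_mul_left]
  rw [htop, ENNReal.mul_top (ENNReal.toReal_ne_zero.mp ha).1]

noncomputable def greenFun (P : E → Measure (ℕ → E)) (B : Set E) (η ζ : E) : ℝ≥0∞ :=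
  ∑' n, P η (killedAt B n ζ)

lemma tsum_prod_mul_measure_killedAt (P : E → Measure (ℕ → E)) (B : Set E) (w c : E → ℝ≥0∞) :
    ∑' x : E × ℕ × E, w x.1 * (c x.2.2 * P x.1 (killedAt B x.2.1 x.2.2)) =
      ∑' ζ, c ζ * ∑' η, w η * greenFun P B η ζ := by
  calc _ = ∑' η, ∑' ζ, ∑' n, w η * (c ζ * P η (killedAt B n ζ)) := by
          simp only [ENNReal.tsum_prod']
          exact tsum_congr fun η => ENNReal.tsum_comm
    _ = ∑' ζ, ∑' η, ∑' n, c ζ * (w η * P η (killedAt B n ζ)) := by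
          rw [ENNReal.tsum_comm]
          simp only [mul_left_comm]
    _ = _ := by simp_rw [greenFun, ENNReal.tsum_mul_left]

lemma tsum_toReal_mul_measureReal_killedAt (P : E → Measure (ℕ → E)) (B : Set E)
    (w : E → ℝ≥0∞) (ζ : E) (hfin : ∑' η, w η * greenFun P B η ζ ≠ ⊤) :
    ∑' q : E × ℕ, (w q.1).toReal * (P q.1).real (killedAt B q.2 ζ) =
      (∑' η, w η * greenFun P B η ζ).toReal := by
  have hprod : ∑' η, w η * greenFun P B η ζ =
      ∑' q : E × ℕ, w q.1 * P q.1 (killedAt B q.2 ζ) := by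
    rw [ENNReal.tsum_prod']
    simp_rw [greenFun, ENNReal.tsum_mul_left]
  rw [hprod] at hfin ⊢
  rw [ENNReal.tsum_toReal_eq fun q => ne_top_of_le_ne_top hfin (ENNReal.le_tsum q)]
  simp only [measureReal_def, ENNReal.toReal_mul]

structure IsMarkovFamily (P : E → Measure (ℕ → E)) (p : E → E → ℝ≥0∞) : Prop where
  isProbabilityMeasure : ∀ η, IsProbabilityMeasure (P η)
  start : ∀ η, P η {ω | ω 0 = η} = 1
  step : ∀ η ξ (C : Set (ℕ → E)), MeasurableSet C →
    P η {ω | ω 1 = ξ ∧ pathShift 1 ω ∈ C} = p η ξ * P ξ C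

namespace IsMarkovFamily

variable {P : E → Measure (ℕ → E)} {p : E → E → ℝ≥0∞} (hP : IsMarkovFamily P p)
include hP

lemma measure_apply_one_eq (ξ ζ : E) : P ξ {ω | ω 1 = ζ} = p ξ ζ := by
  simpa [(hP.isProbabilityMeasure ζ).measure_univ] using hP.step ξ ζ Set.univ .univ

variable [MeasurableSingletonClass E]

lemma measure_eq_of_inter_start {η : E} {S T : Set (ℕ → E)}
    (h : S ∩ {ω | ω 0 = η} = T ∩ {ω | ω 0 = η}) : P η S = P η T := by
  have := hP.isProbabilityMeasure η
  have hnull : P η {ω | ω 0 = η}ᶜ = 0 :=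
    (prob_compl_eq_zero_iff (measurableSet_apply_eq 0 η)).mpr (hP.start η)
  rw [← measure_inter_conull hnull, h, measure_inter_conull hnull]

lemma measure_notMem_zero_inter {B : Set E} (η : E) (S : Set (ℕ → E)) :
    P η ({ω | ω 0 ∉ B} ∩ S) = if η ∈ B then 0 else P η S := by
  split_ifs with hη
  · rw [← measure_empty (μ := P η)]
    refine hP.measure_eq_of_inter_start ?_
    ext ω
    simp only [Set.mem_inter_iff, Set.mem_ofPred_eq, Set.empty_inter, Set.mem_empty_iff_false,
      iff_false, not_and]
    exact fun ⟨h, _⟩ h0 => h (h0 ▸ hη)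
  · refine hP.measure_eq_of_inter_start ?_
    ext ω
    simp only [Set.mem_inter_iff, Set.mem_ofPred_eq]
    exact ⟨fun ⟨⟨_, h⟩, h0⟩ => ⟨h, h0⟩, fun ⟨h, h0⟩ => ⟨⟨h0 ▸ hη, h⟩, h0⟩⟩

lemma measure_killedAt_zero_inter (B : Set E) (η ξ : E) (C : Set (ℕ → E)) :
    P η (killedAt B 0 ξ ∩ C) = if η = ξ ∧ ξ ∉ B then P η C else 0 := by
  rw [killedAt_zero]
  split_ifs with h
  · obtain ⟨rfl, hη⟩ := h
    refine hP.measure_eq_of_inter_start ?_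
    ext ω
    simp only [Set.mem_inter_iff, Set.mem_ofPred_eq]
    tauto
  · rw [← measure_empty (μ := P η)]
    refine hP.measure_eq_of_inter_start ?_
    ext ω
    simp only [Set.mem_inter_iff, Set.mem_ofPred_eq, Set.empty_inter, Set.mem_empty_iff_false,
      iff_false]
    rintro ⟨⟨⟨h0, hξ⟩, -⟩, h0'⟩
    exact h ⟨h0' ▸ h0, hξ⟩

variable [Countable E]

lemma measure_preimage_pathShift_one (η : E) {C : Set (ℕ → E)} (hC : MeasurableSet C) :
    P η (pathShift 1 ⁻¹' C) = ∑' ξ, p η ξ * P ξ C := by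
  have hdecomp : pathShift 1 ⁻¹' C = ⋃ ξ, {ω | ω 1 = ξ ∧ pathShift 1 ω ∈ C} := by
    ext ω
    simp
  rw [hdecomp, measure_iUnion]
  · exact tsum_congr fun ξ => hP.step η ξ C hC
  · exact fun ξ ξ' hne => Set.disjoint_left.mpr fun ω h h' => hne (h.1 ▸ h'.1)
  · exact fun ξ => (measurableSet_apply_eq 1 ξ).inter (measurable_pathShift 1 hC)

lemma measure_killedAt_succ_inter_pathShift (B : Set E) (n : ℕ) (η ξ : E) {C : Set (ℕ → E)}
    (hC : MeasurableSet C) :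
    P η (killedAt B (n + 1) ξ ∩ pathShift (n + 1) ⁻¹' C) =
      if η ∈ B then 0 else ∑' ζ, p η ζ * P ζ (killedAt B n ξ ∩ pathShift n ⁻¹' C) := by
  rw [← hP.measure_preimage_pathShift_one η
    ((measurableSet_killedAt B.to_countable.measurableSet n ξ).inter (measurable_pathShift n hC)),
    killedAt_succ, Set.inter_assoc]
  exact hP.measure_notMem_zero_inter η _

lemma measure_killedAt_succ_first_step (B : Set E) (n : ℕ) (η ξ : E) :
    P η (killedAt B (n + 1) ξ) =
      if η ∈ B then 0 else ∑' ζ, p η ζ * P ζ (killedAt B n ξ) := by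
  simpa using hP.measure_killedAt_succ_inter_pathShift B n η ξ MeasurableSet.univ

lemma measure_killedAt_inter_pathShift (B : Set E) (n : ℕ) (η ξ : E) {C : Set (ℕ → E)}
    (hC : MeasurableSet C) :
    P η (killedAt B n ξ ∩ pathShift n ⁻¹' C) = P η (killedAt B n ξ) * P ξ C := by
  induction n generalizing η with
  | zero =>
    rw [← Set.inter_univ (killedAt B 0 ξ), hP.measure_killedAt_zero_inter,
      Set.inter_univ, hP.measure_killedAt_zero_inter]
    split_ifs with h
    · rw [h.1, (hP.isProbabilityMeasure ξ).measure_univ, one_mul]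
      rfl
    · rw [zero_mul]
  | succ n ih =>
    rw [hP.measure_killedAt_succ_inter_pathShift B n η ξ hC, hP.measure_killedAt_succ_first_step]
    split_ifs
    · rw [zero_mul]
    · simp only [ih, ← ENNReal.tsum_mul_right, mul_assoc]

lemma measure_killedAt_succ_last_step (B : Set E) (n : ℕ) (η ζ : E) :
    P η (killedAt B (n + 1) ζ) =
      if ζ ∈ B then 0 else ∑' ξ, P η (killedAt B n ξ) * p ξ ζ := by
  split_ifs with hζ
  · refine measure_mono_null (fun ω hω => ?_) (measure_empty (μ := P η))
    exact hω.2 (n + 1) le_rfl (hω.1 ▸ hζ)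
  have hdecomp :
      killedAt B (n + 1) ζ = ⋃ ξ, killedAt B n ξ ∩ pathShift n ⁻¹' {ω | ω 1 = ζ} := by
    ext ω
    simp only [killedAt, pathShift, Set.mem_iUnion, Set.mem_inter_iff, Set.mem_preimage,
      Set.mem_ofPred_eq, Nat.add_comm 1 n]
    constructor
    · exact fun ⟨hω, hB⟩ => ⟨ω n, ⟨rfl, fun m hm => hB m (by omega)⟩, hω⟩
    · rintro ⟨ξ, ⟨-, hB⟩, hω⟩
      refine ⟨hω, fun m hm => ?_⟩
      rcases Nat.lt_or_ge n m with h | h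
      · exact (show m = n + 1 by omega) ▸ hω ▸ hζ
      · exact hB m h
  rw [hdecomp, measure_iUnion]
  · exact tsum_congr fun ξ => by
      rw [hP.measure_killedAt_inter_pathShift B n η ξ (measurableSet_apply_eq 1 ζ),
        hP.measure_apply_one_eq]
  · exact fun ξ ξ' hne => Set.disjoint_left.mpr fun ω h h' => hne (h.1.1 ▸ h'.1.1)
  · exact fun ξ => (measurableSet_killedAt B.to_countable.measurableSet n ξ).inter
      (measurable_pathShift n (measurableSet_apply_eq 1 ζ))

lemma measure_killedAt_reversible {M : E → ℝ≥0∞} (hM : ∀ η ξ, M η * p η ξ = M ξ * p ξ η)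
    (B : Set E) (n : ℕ) (η ζ : E) :
    M η * P η (killedAt B n ζ) = M ζ * P ζ (killedAt B n η) := by
  induction n generalizing η ζ with
  | zero =>
    rw [← Set.inter_univ (killedAt B 0 ζ), ← Set.inter_univ (killedAt B 0 η),
      hP.measure_killedAt_zero_inter, hP.measure_killedAt_zero_inter]
    by_cases h : η = ζ
    · rw [h]
    · simp [h, Ne.symm h]
  | succ n ih =>
    rw [hP.measure_killedAt_succ_last_step, hP.measure_killedAt_succ_first_step]
    split_ifs
    · rw [mul_zero, mul_zero]
    · rw [← ENNReal.tsum_mul_left, ← ENNReal.tsum_mul_left]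
      refine tsum_congr fun ξ => ?_
      calc M η * (P η (killedAt B n ξ) * p ξ ζ)
          = M ξ * P ξ (killedAt B n η) * p ξ ζ := by rw [← mul_assoc, ih]
        _ = M ξ * p ξ ζ * P ξ (killedAt B n η) := by ring
        _ = M ζ * (p ζ ξ * P ξ (killedAt B n η)) := by rw [hM, mul_assoc]

lemma measure_lastExitAt (A B : Set E) (n : ℕ) (ζ : E) :
    P ζ (lastExitAt A B n) =
      ∑' η, A.indicator (fun η => P ζ (killedAt B n η) * P η {ω | retT B ω < retT A ω}) η := by
  have hEsc : MeasurableSet {ω : ℕ → E | retT B ω < retT A ω} :=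
    measurableSet_lt (measurable_retT B.to_countable.measurableSet)
      (measurable_retT A.to_countable.measurableSet)
  rw [lastExitAt_eq_biUnion, measure_biUnion A.to_countable, ← tsum_subtype]
  · exact tsum_congr fun η => hP.measure_killedAt_inter_pathShift B n ζ η hEsc
  · exact fun η _ η' _ hne => Set.disjoint_left.mpr fun ω h h' => hne (h.1.1.symm.trans h'.1.1)
  · exact fun η _ => (measurableSet_killedAt B.to_countable.measurableSet n η).inter
      (measurable_pathShift n hEsc)

lemma tsum_indicator_mul_greenFun {M : E → ℝ≥0∞} (hM : ∀ η ξ, M η * p η ξ = M ξ * p ξ η)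
    {A B : Set E} (hAB : Disjoint A B) (hrec : ∀ ζ, ∀ᵐ ω ∂P ζ, ∃ k, ω k ∈ B) (ζ : E) :
    ∑' η, A.indicator (fun η => M η * P η {ω | retT B ω < retT A ω}) η * greenFun P B η ζ =
      M ζ * P ζ {ω | hitT A ω < hitT B ω} := by
  have hterm : ∀ n η, A.indicator (fun η => M η * P η {ω | retT B ω < retT A ω}) η *
      P η (killedAt B n ζ) = M ζ * A.indicator
        (fun η => P ζ (killedAt B n η) * P η {ω | retT B ω < retT A ω}) η := by
    intro n η
    by_cases hη : η ∈ A
    · rw [Set.indicator_of_mem hη, Set.indicator_of_mem hη, mul_right_comm,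
        hP.measure_killedAt_reversible hM, mul_assoc]
    · rw [Set.indicator_of_notMem hη, Set.indicator_of_notMem hη, zero_mul, mul_zero]
  simp_rw [greenFun, ← ENNReal.tsum_mul_left, hterm]
  rw [ENNReal.tsum_comm]
  simp_rw [ENNReal.tsum_mul_left, ← hP.measure_lastExitAt]
  rw [measure_hitT_lt_hitT A.to_countable.measurableSet B.to_countable.measurableSet hAB (hrec ζ)]

theorem tsum_toReal_mul_integral_sumBeforeHit {M : E → ℝ≥0∞}
    (hM : ∀ η ξ, M η * p η ξ = M ξ * p ξ η) {A B : Set E} (hAB : Disjoint A B)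
    (hrec : ∀ ζ, ∀ᵐ ω ∂P ζ, ∃ k, ω k ∈ B) (h : E → ℝ)
    (hh : ∑' ζ, ‖h ζ‖ₑ * (M ζ * P ζ {ω | hitT A ω < hitT B ω}) ≠ ⊤) :
    ∑' η, (A.indicator (fun η => M η * P η {ω | retT B ω < retT A ω}) η).toReal *
        ∫ ω, sumBeforeHit B h ω ∂P η =
      ∑' ζ, h ζ * (M ζ * P ζ {ω | hitT A ω < hitT B ω}).toReal := by
  set w := fun η => A.indicator (fun η => M η * P η {ω | retT B ω < retT A ω}) η
  have hkey : ∀ ζ, ∑' η, w η * greenFun P B η ζ = M ζ * P ζ {ω | hitT A ω < hitT B ω} :=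
    hP.tsum_indicator_mul_greenFun hM hAB hrec
  set F : E × ℕ × E → ℝ := fun x =>
    (w x.1).toReal * (h x.2.2 * (P x.1).real (killedAt B x.2.1 x.2.2))
  have htotal :
      ∑' x : E × ℕ × E, w x.1 * (‖h x.2.2‖ₑ * P x.1 (killedAt B x.2.1 x.2.2)) ≠ ⊤ := by
    rw [tsum_prod_mul_measure_killedAt P B w fun ζ => ‖h ζ‖ₑ]
    simpa only [hkey] using hh
  have hsumm : Summable F := by
    refine Summable.of_enorm (ne_top_of_le_ne_top htotal (ENNReal.tsum_le_tsum fun x => ?_))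
    simp only [F, enorm_mul, measureReal_def]
    gcongr <;> exact enorm_toReal_le _
  have hrow : ∀ η, (w η).toReal * ∫ ω, sumBeforeHit B h ω ∂P η = ∑' q : ℕ × E, F (η, q) :=
    fun η => toReal_mul_integral_sumBeforeHit (P η) B h <| ne_top_of_le_ne_top htotal <| by
      rw [← ENNReal.tsum_mul_left]
      exact (ENNReal.le_tsum η).trans_eq (ENNReal.tsum_prod' (f := fun x : E × ℕ × E =>
        w x.1 * (‖h x.2.2‖ₑ * P x.1 (killedAt B x.2.1 x.2.2)))).symm
  have hcol : ∀ ζ, ∑' q : E × ℕ, F (q.1, q.2, ζ) =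
      h ζ * (M ζ * P ζ {ω | hitT A ω < hitT B ω}).toReal := by
    intro ζ
    by_cases hζ : h ζ = 0
    · simp [F, hζ]
    have hfin : ∑' η, w η * greenFun P B η ζ ≠ ⊤ := fun htop => hh <|
      ENNReal.tsum_eq_top_of_eq_top
        ⟨ζ, by rw [← hkey, htop, ENNReal.mul_top (enorm_ne_zero.mpr hζ)]⟩
    rw [← hkey, ← tsum_toReal_mul_measureReal_killedAt P B w ζ hfin, ← tsum_mul_left]
    exact tsum_congr fun q => by ring
  let e : E × E × ℕ ≃ E × ℕ × E :=
    { toFun := fun y => (y.2.1, y.2.2, y.1), invFun := fun x => (x.2.2, x.1, x.2.1),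
      left_inv := fun _ => rfl, right_inv := fun _ => rfl }
  calc _ = ∑' η, ∑' q : ℕ × E, F (η, q) := tsum_congr hrow
    _ = ∑' x, F x := hsumm.tsum_prod.symm
    _ = ∑' y, F (e y) := (e.tsum_eq F).symm
    _ = ∑' ζ, ∑' q : E × ℕ, F (e (ζ, q)) := (e.summable_iff.mpr hsumm).tsum_prod
    _ = _ := tsum_congr hcol

end IsMarkovFamily

lemma ae_exists_mem_of_measure_visit_eq_one [MeasurableSingletonClass E] {ν : Measure (ℕ → E)}
    [IsProbabilityMeasure ν] {B : Set E} {b : E} (hb : b ∈ B)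
    (hvisit : ν {ω | ∃ n, 0 < n ∧ ω n = b} = 1) : ∀ᵐ ω ∂ν, ∃ k, ω k ∈ B := by
  have hmeas : MeasurableSet {ω : ℕ → E | ∃ n, 0 < n ∧ ω n = b} := by
    simp only [Set.ofPred_exists]
    exact .iUnion fun n => (MeasurableSet.const _).inter (measurableSet_apply_eq n b)
  exact ((ae_iff_measure_eq hmeas.nullMeasurableSet).mpr (by rw [hvisit, measure_univ])).mono
    fun ω ⟨n, _, hn⟩ => ⟨n, hn ▸ hb⟩

end

/-- The time integral of the continuous-time chain up to `T_B` is expressed through its jump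
chain `ℙ` as `G(ω) = ∑_{n < t_B(ω)} g(ω_n)/lam(ω_n)`, the mean holding time at `ζ` being
`1/lam(ζ)`. -/
theorem stmt11_general {E : Type*} [Countable E] [MeasurableSpace E] [MeasurableSingletonClass E]
    (R : E → E → ℝ) (lam μ g : E → ℝ) (ℙ : E → Measure (ℕ → E))
    (A B : Set E) (cap : ℝ) (ν fAB : E → ℝ) (G : (ℕ → E) → ℝ)
    (hAB : Disjoint A B) (hB : B.Nonempty)
    (hlampos : ∀ η, 0 < lam η)
    (hμpos : ∀ η, 0 < μ η)
    (hrev : ∀ η ξ, μ η * R η ξ = μ ξ * R ξ η)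
    (hgint : Summable fun ζ => μ ζ * |g ζ|)
    (hprob : ∀ η, IsProbabilityMeasure (ℙ η))
    (hstart : ∀ η, ℙ η {ω | ω 0 = η} = 1)
    (hMarkov : ∀ (η ξ : E) (C : Set (ℕ → E)), MeasurableSet C →
      ℙ η {ω | ω 1 = ξ ∧ (fun n => ω (n + 1)) ∈ C}
        = ENNReal.ofReal (R η ξ / lam η) * ℙ ξ C)
    (hrec : ∀ η ξ, ℙ η {ω | ∃ n, 0 < n ∧ ω n = ξ} = 1)
    (hν : ∀ η, ν η = lam η * μ η * (ℙ η {ω | retT B ω < retT A ω}).toReal / cap)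
    (hG : ∀ ω, G ω = ∑' n : ℕ,
      (if (n : ℕ∞) < hitT B ω then g (ω n) / lam (ω n) else 0))
    (hfAB : ∀ ζ, fAB ζ = (ℙ ζ {ω | hitT A ω < hitT B ω}).toReal) :
    ∑' η, Set.indicator A (fun η => ν η * ∫ ω, G ω ∂ℙ η) η
      = (∑' ζ, μ ζ * g ζ * fAB ζ) / cap := by
  have := hprob
  have hP : IsMarkovFamily ℙ fun η ξ => ENNReal.ofReal (R η ξ / lam η) :=
    ⟨hprob, hstart, hMarkov⟩
  obtain ⟨b, hb⟩ := hB
  have hsum := hP.tsum_toReal_mul_integral_sumBeforeHit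
    (ofReal_mul_ofReal_div_symm hlampos (fun η => (hμpos η).le) hrev) hAB
    (fun ζ => ae_exists_mem_of_measure_visit_eq_one hb (hrec ζ b)) (fun ζ => g ζ / lam ζ)
    (tsum_enorm_div_mul_ne_top hlampos hgint fun ζ => prob_le_one)
  have hM0 (η : E) : 0 ≤ lam η * μ η := (mul_pos (hlampos η) (hμpos η)).le
  have hlhs (η : E) : A.indicator (fun η => ν η * ∫ ω, G ω ∂ℙ η) η =
      (A.indicator (fun η => ENNReal.ofReal (lam η * μ η) * ℙ η {ω | retT B ω < retT A ω})
        η).toReal * (∫ ω, sumBeforeHit B (fun ζ => g ζ / lam ζ) ω ∂ℙ η) / cap := by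
    by_cases hη : η ∈ A
    · simp only [Set.indicator_of_mem hη, hν, ENNReal.toReal_mul, ENNReal.toReal_ofReal (hM0 η),
        show G = sumBeforeHit B (fun ζ => g ζ / lam ζ) from funext hG]
      ring
    · simp [hη]
  have hrhs (ζ : E) : μ ζ * g ζ * fAB ζ =
      g ζ / lam ζ * (ENNReal.ofReal (lam ζ * μ ζ) * ℙ ζ {ω | hitT A ω < hitT B ω}).toReal := by
    rw [ENNReal.toReal_mul, ENNReal.toReal_ofReal (hM0 ζ), hfAB]
    field_simp [(hlampos ζ).ne']
  simp_rw [hlhs, hrhs, tsum_div_const, hsum]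

/-- For an irreducible positive recurrent chain reversible with respect to `μ`, with
`M = lam·μ` finite, disjoint `A`, `B` and the probability
`ν_{AB}(η) = M(η)P_η[T_B⁺ < T_A⁺]/Cap(A,B)` on `A`, one has
`E_{ν_{AB}}[∫_0^{T_B} g(η_t) dt] = ⟨g, f_{AB}⟩_μ / Cap(A,B)` for every `μ`-integrable `g`.
The time integral of the continuous-time chain up to `T_B` is expressed through its jump
chain `ℙ` as `G(ω) = ∑_{n < t_B(ω)} g(ω_n)/lam(ω_n)` (the mean holding time at `ζ` being
`1/lam(ζ)`), and `f_{AB}(ζ) = P_ζ[T_A < T_B]`. -/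
theorem stmt11 {E : Type*} [Countable E] [MeasurableSpace E] [MeasurableSingletonClass E]
    (R : E → E → ℝ) (lam μ g : E → ℝ) (ℙ : E → Measure (ℕ → E))
    (A B : Set E) (cap : ℝ) (ν fAB : E → ℝ) (G : (ℕ → E) → ℝ)
    (hAB : Disjoint A B) (hA : A.Nonempty) (hB : B.Nonempty)
    (hRdiag : ∀ η, R η η = 0)
    (hR_nonneg : ∀ η ξ, 0 ≤ R η ξ)
    (hRsum : ∀ η, Summable (R η))
    (hlam : ∀ η, lam η = ∑' ξ, R η ξ)
    (hlampos : ∀ η, 0 < lam η)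
    (hμpos : ∀ η, 0 < μ η)
    (hμprob : ∑' η, μ η = 1)
    (hμsummable : Summable μ)
    (hinv : ∀ ξ, ∑' η, (if η = ξ then 0 else μ η * R η ξ) = μ ξ * lam ξ)
    (hrev : ∀ η ξ, μ η * R η ξ = μ ξ * R ξ η)
    (hMfin : Summable fun η => lam η * μ η)
    (hgint : Summable fun ζ => μ ζ * |g ζ|)
    (hprob : ∀ η, IsProbabilityMeasure (ℙ η))
    (hstart : ∀ η, ℙ η {ω | ω 0 = η} = 1)
    (hMarkov : ∀ (η ξ : E) (C : Set (ℕ → E)), MeasurableSet C →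
      ℙ η {ω | ω 1 = ξ ∧ (fun n => ω (n + 1)) ∈ C}
        = ENNReal.ofReal (R η ξ / lam η) * ℙ ξ C)
    (hrec : ∀ η ξ, ℙ η {ω | ∃ n, 0 < n ∧ ω n = ξ} = 1)
    (hcap : cap = ∑' η, Set.indicator A
      (fun η => lam η * μ η * (ℙ η {ω | retT B ω < retT A ω}).toReal) η)
    (hν : ∀ η, ν η = lam η * μ η * (ℙ η {ω | retT B ω < retT A ω}).toReal / cap)
    (hG : ∀ ω, G ω = ∑' n : ℕ,
      (if (n : ℕ∞) < hitT B ω then g (ω n) / lam (ω n) else 0))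
    (hfAB : ∀ ζ, fAB ζ = (ℙ ζ {ω | hitT A ω < hitT B ω}).toReal) :
    ∑' η, Set.indicator A (fun η => ν η * ∫ ω, G ω ∂ℙ η) η
      = (∑' ζ, μ ζ * g ζ * fAB ζ) / cap :=
  stmt11_general R lam μ g ℙ A B cap ν fAB G hAB hB hlampos hμpos hrev hgint hprob hstart hMarkov
    hrec hν hG hfAB
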